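/- Fix 1 ≤ k ≤ n and a sign γ, and set σ = u_{k−1}⊗∂^γu_1⊗u_{n−k}. Then there is a chain map f : I^n → I^n given, for x a chain in I^{k−1} and y a chain in I^{n−k}, by f(x⊗u_1⊗y) = 0 and f(x⊗∂^γu_1⊗y) = f(x⊗∂^{−γ}u_1⊗y) = x⊗∂^γu_1⊗y, and this chain map satisfies f⟨u_n⟩_i^α = ⟨σ⟩_i^α for all i and α. -/

import Mathlib

/-!
The atom `⟨ρ⟩_q^α` is the sum of the `q`-cells obtained from `ρ` by replacing `u₁` factors by
faces `∂^β u₁`, the sign at each new face being `(−1)^m α` with `m` the number of `u₁` factors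
before it. Indeed the boundary of this sum is `±(⟨ρ⟩_q^α − ⟨ρ⟩_q^{−α})`: a `q`-cell `τ` gets one
contribution from each position where its sign pattern switches from the `α`-rule to the
`(−α)`-rule, and these cancel unless the pattern is constant. Below the top dimension the two
sums have disjoint supports, so `∂^α` picks out the `α`-sum, and induction on the codimension
gives the formula.

The projection onto the face `∂^γ` at position `k` is a chain map because the two faces
`∂^± u₁` at position `k` have opposite signs. When `ρ` has `u₁` at position `k`, it sends the
cells of `⟨ρ⟩^α` with a face at `k` bijectively onto the cells of `⟨ρ'⟩^α`, where `ρ'` has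
`∂^γ u₁` at `k`: the sign at `k` is forced by the rule, and no other count of `u₁` factors
changes. For `ρ = u_n` this is the theorem.
-/

namespace CubicalNerve

/-- Signs: `true` is `+`, `false` is `−`, as an integer `±1`. -/
def sgn (α : Bool) : ℤ := if α then 1 else -1

/-- Sign twisting: `twist α m` is the sign `(−1)^m α`. -/
def twist (α : Bool) (m : ℕ) : Bool := if Even m then α else !α

/-- A standard basis element of the chain complex `Iⁿ`: the factor at position `i` is
`u₁` when the value is `none`, and `∂^α u₁` when the value is `some α`. -/
abbrev Cell (n : ℕ) := Fin n → Option Bool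

/-- The dimension of a standard basis element: the number of `u₁` factors. -/
def Cell.dim {n : ℕ} (σ : Cell n) : ℕ := (Finset.univ.filter fun i => σ i = none).card

/-- The number of `u₁` factors strictly before position `i`. -/
def Cell.below {n : ℕ} (σ : Cell n) (i : Fin n) : ℕ :=
  (Finset.univ.filter fun j => j < i ∧ σ j = none).card

/-- The number of `∂^± u₁` factors at positions `≤ j`. -/
def Cell.sLe {n : ℕ} (σ : Cell n) (j : Fin n) : ℕ :=
  (Finset.univ.filter fun i => i ≤ j ∧ σ i ≠ none).card

/-- The chain groups of `Iⁿ` (all degrees taken together): the free abelian group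
on the standard basis elements. -/
abbrev Chain (n : ℕ) := Cell n →₀ ℤ

/-- The boundary of a standard basis element (tensor-product boundary formula). -/
noncomputable def bdCell {n : ℕ} (σ : Cell n) : Chain n :=
  ∑ i ∈ Finset.univ.filter (fun i => σ i = none),
    ((-1 : ℤ) ^ σ.below i) •
      (Finsupp.single (Function.update σ i (some true)) 1 -
        Finsupp.single (Function.update σ i (some false)) 1)

/-- The boundary operator of `Iⁿ`. -/
noncomputable def bd {n : ℕ} (c : Chain n) : Chain n := c.sum fun σ z => z • bdCell σ

/-- The positive part of a chain. -/
noncomputable def posPart {n : ℕ} (c : Chain n) : Chain n :=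
  Finsupp.mapRange (fun z => max z 0) (by simp) c

/-- The negative part of a chain. -/
noncomputable def negPart {n : ℕ} (c : Chain n) : Chain n :=
  Finsupp.mapRange (fun z => max (-z) 0) (by simp) c

/-- `∂^α`: the positive (resp. negative) part of the boundary. -/
noncomputable def bdp {n : ℕ} (α : Bool) (c : Chain n) : Chain n :=
  if α then posPart (bd c) else negPart (bd c)

/-- The atom `⟨σ⟩`: `atom σ α q` is the chain `⟨σ⟩_q^α = (∂^α)^{p−q} σ` for `q ≤ p = dim σ`,
and `0` for `q > p`. -/
noncomputable def atom {n : ℕ} (σ : Cell n) (α : Bool) (q : ℕ) : Chain n :=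
  if q ≤ σ.dim then (bdp α)^[σ.dim - q] (Finsupp.single σ 1) else 0

/-- The augmentation (extended by zero on positive-degree chains). -/
noncomputable def aug {n : ℕ} (c : Chain n) : ℤ := c.sum fun σ z => if σ.dim = 0 then z else 0

/-- The top basis element `u_n = u₁ ⊗ ⋯ ⊗ u₁` of `Iⁿ`. -/
def un (n : ℕ) : Cell n := fun _ => none

/-- The basis element `u_{k-1} ⊗ ∂^γ u₁ ⊗ u_{n-k}` (here `k : Fin n` is `k−1` in the
1-indexed notation of the paper). -/
def kcell {n : ℕ} (k : Fin n) (γ : Bool) : Cell n := Function.update (un n) k (some γ)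

/-- Membership in `ν Iⁿ` for a double sequence `x`, where `x i α` is `x_i^α`:
each `x_i^α` is an `i`-chain which is a nonnegative sum of standard basis elements,
`ε x_0^- = ε x_0^+ = 1`, and `x_i^+ − x_i^− = ∂ x_{i+1}^- = ∂ x_{i+1}^+`. -/
def IsNu {n : ℕ} (x : ℕ → Bool → Chain n) : Prop :=
  (∀ i α, ∀ σ ∈ (x i α).support, Cell.dim σ = i) ∧
  (∀ i α, 0 ≤ x i α) ∧
  (∀ α, aug (x 0 α) = 1) ∧
  (∀ i α, x i true - x i false = bd (x (i + 1) α))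

/-- The double sequence of an atom. -/
noncomputable def atomSeq {n : ℕ} (σ : Cell n) : ℕ → Bool → Chain n := fun i α => atom σ α i

/-- The identity operation `d_p^α` on double sequences. -/
noncomputable def dOp {n : ℕ} (p : ℕ) (α : Bool) (x : ℕ → Bool → Chain n) : ℕ → Bool → Chain n :=
  fun i β => if i < p then x i β else if i = p then x p α else 0

/-- The composition `x #_p y = x − d_p⁺ x + y`, formed termwise. -/
noncomputable def comp {n : ℕ} (p : ℕ) (x y : ℕ → Bool → Chain n) : ℕ → Bool → Chain n :=
  fun i β => x i β - dOp p true x i β + y i β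

/-- Insertion of a new tensor factor at (0-indexed) position `i` (clamped into range). -/
def insertCell {m : ℕ} (i : ℕ) (v : Option Bool) (σ : Cell m) : Cell (m + 1) :=
  Fin.insertNth ⟨min i m, Nat.lt_succ_of_le (min_le_right i m)⟩ v σ

/-- The face chain map `∂̌_i^α : Iᵐ → Iᵐ⁺¹` (with `i` 1-indexed, `1 ≤ i ≤ m+1`),
given on standard basis elements by `x ⊗ y ↦ x ⊗ ∂^α u₁ ⊗ y`. -/
noncomputable def faceL (m : ℕ) (i : ℕ) (α : Bool) : Chain m →ₗ[ℤ] Chain (m + 1) :=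
  Finsupp.lmapDomain ℤ ℤ (insertCell (i - 1) (some α))

/-- `IsFaceComposite F` means that `F` is a composite of face chain maps `∂̌_i^α`. -/
inductive IsFaceComposite : ∀ {m n : ℕ}, (Chain m →ₗ[ℤ] Chain n) → Prop
  | id (m : ℕ) : IsFaceComposite (LinearMap.id : Chain m →ₗ[ℤ] Chain m)
  | step {m d : ℕ} {F : Chain m →ₗ[ℤ] Chain d} (i : ℕ) (α : Bool)
      (h1 : 1 ≤ i) (h2 : i ≤ d + 1) :
      IsFaceComposite F → IsFaceComposite ((faceL d i α).comp F)

/-- `stdC m p ι a` is the composite `∂̌_{ι 0}^{a 0} ∘ ⋯ ∘ ∂̌_{ι (p-1)}^{a (p-1)} : Iᵐ → Iᵐ⁺ᵖ`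
(so `∂̌_{ι (p-1)}^{a (p-1)}` is applied first). -/
noncomputable def stdC (m : ℕ) :
    (p : ℕ) → (Fin p → ℕ) → (Fin p → Bool) → (Chain m →ₗ[ℤ] Chain (m + p))
  | 0, _, _ => LinearMap.id
  | p + 1, ι, a =>
      (faceL (m + p) (ι 0) (a 0)).comp (stdC m p (fun r => ι r.succ) (fun r => a r.succ))

/-- Transport of chains along an equality of dimensions. -/
noncomputable def chainCongr {a b : ℕ} (h : a = b) : Chain a ≃ₗ[ℤ] Chain b :=
  Finsupp.domLCongr (Equiv.arrowCongr (finCongr h) (Equiv.refl (Option Bool)))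

/-- The basis element of `I¹` with value `v`. -/
def cellOf (v : Option Bool) : Cell 1 := fun _ => v

/-- The `n`-fold tensor product of chains of `I¹`, as a chain of `Iⁿ`. -/
noncomputable def tens {n : ℕ} (c : Fin n → Chain 1) : Chain n :=
  Finsupp.equivFunOnFinite.symm fun σ => ∏ j, (c j) (cellOf (σ j))

/-- `τ` has an "extreme" standard decomposition of constant sign `ε`: for its `r`-th
factor `∂_{i}^{α}` (`r`, `i` 1-indexed), `(−1)^{i−r} α = ε`. -/
def ExtremeSign {n : ℕ} (τ : Cell n) (ε : ℤ) : Prop :=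
  ∀ (j : Fin n) (α : Bool), τ j = some α →
    (-1 : ℤ) ^ ((j : ℕ) + 1 + τ.sLe j) * sgn α = ε

/-- The basis element `τ` corresponds to a precubical operation complementary to
`∂_{k+1}^γ` (with `k : Fin n`, i.e. `k+1` in the paper's 1-indexing): its standard
decomposition has no factor at position `k`, and inserting `∂_{k+1}^{−γ}` produces
a standard decomposition of constant sign. -/
def CellCompl {n : ℕ} (k : Fin n) (γ : Bool) (τ : Cell n) : Prop :=
  τ k = none ∧ ∃ ε : ℤ, ExtremeSign (Function.update τ k (some (!γ))) ε

/-- The chain homotopy `D` associated to the face `∂_{k+1}^γ` (0-indexed `k : Fin n`). -/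
noncomputable def Dfun {n : ℕ} (k : Fin n) (γ : Bool) (c : Chain n) : Chain n :=
  c.sum fun τ z =>
    if τ k = some (!γ) then
      (z * (-((-1 : ℤ) ^ Cell.below τ k * sgn γ))) •
        Finsupp.single (Function.update τ k (none : Option Bool)) 1
    else 0

/-- The double sequence `A_q^β` of Proposition 6.4. -/
noncomputable def Aseq {n : ℕ} (k : Fin n) (γ : Bool) (q : ℕ) (β : Bool) :
    ℕ → Bool → Chain n :=
  fun i α =>
    if i + 1 < q then atom (un n) α i
    else if i + 1 = q then
      (if α = β then atom (un n) β i
       else atom (un n) β i - bd (Dfun k γ (atom (un n) β i)))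
    else if i = q then sgn β • Dfun k γ (atom (un n) β (q - 1))
    else 0

/-- The elements `A_q` of Proposition 6.5, defined inductively from the `A_q^β` by
`A_0 = ⟨σ⟩` and `A_q = A_q^− #_{q−1} A_{q−1} #_{q−1} A_q^+`. -/
noncomputable def Aq {n : ℕ} (k : Fin n) (γ : Bool) : ℕ → (ℕ → Bool → Chain n)
  | 0 => atomSeq (kcell k γ)
  | q + 1 => comp q (comp q (Aseq k γ (q + 1) false) (Aq k γ q)) (Aseq k γ (q + 1) true)

variable {n : ℕ}

/-- A non-constant pattern of `p` on `J` has either no switch point or two of opposite signs: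
the last point satisfying `p` and the first one failing it. -/
lemma sum_sign_switchPoints {ι : Type*} [LinearOrder ι] (J : Finset ι) (p : ι → Prop)
    [DecidablePred p] :
    ∑ i ∈ J with (∀ j ∈ J, j < i → p j) ∧ ∀ j ∈ J, i < j → ¬ p j, (if p i then (1 : ℤ) else -1)
      = (if ∀ j ∈ J, p j then 1 else 0) - if ∀ j ∈ J, ¬ p j then 1 else 0 := by
  induction J using Finset.induction_on_max with
  | empty => simp
  | insert a J hlt ih =>
    have ha : a ∉ J := fun h => lt_irrefl a (hlt a h)
    have hswitch_a : ((∀ j ∈ insert a J, j < a → p j) ∧ ∀ j ∈ insert a J, a < j → ¬ p j) ↔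
        ∀ j ∈ J, p j := by
      simp only [Finset.forall_mem_insert, lt_irrefl, false_imp_iff, true_and]
      exact ⟨fun h j hj => h.1 j hj (hlt j hj),
        fun h => ⟨fun j hj _ => h j hj, fun j hj hj' => absurd (hlt j hj) hj'.not_gt⟩⟩
    have hswitch_J : ∀ i ∈ J, ((∀ j ∈ insert a J, j < i → p j) ∧ ∀ j ∈ insert a J, i < j → ¬ p j)
        ↔ ((∀ j ∈ J, j < i → p j) ∧ ∀ j ∈ J, i < j → ¬ p j) ∧ ¬ p a := by
      intro i hi
      simp only [Finset.forall_mem_insert, (hlt i hi).not_gt, hlt i hi, false_imp_iff,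
        true_imp_iff, true_and]
      tauto
    rw [Finset.sum_filter, Finset.sum_insert ha, if_congr hswitch_a rfl rfl,
      Finset.sum_congr rfl fun i hi => if_congr (hswitch_J i hi) rfl rfl]
    by_cases hpa : p a
    · simp [hpa]
    · simp only [hpa, not_false_eq_true, and_true, ← Finset.sum_filter, ih]
      simp only [hpa, Finset.forall_mem_insert, not_false_eq_true, true_and, false_and, if_false]
      split_ifs <;> ring

lemma twist_succ (α : Bool) (m : ℕ) : twist α (m + 1) = !twist α m := by
  by_cases h : Even m <;> simp [twist, Nat.even_add_one, h]

lemma twist_not (α : Bool) (m : ℕ) : twist (!α) m = !twist α m := by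
  by_cases h : Even m <;> simp [twist, h]

lemma neg_one_pow_mul_sgn (α δ : Bool) (m : ℕ) :
    (-1 : ℤ) ^ m * sgn δ = sgn α * if δ = twist α m then 1 else -1 := by
  rcases Nat.even_or_odd m with h | h <;> cases α <;> cases δ <;>
    simp [twist, sgn, h, h.neg_one_pow, Nat.not_even_iff_odd.mpr]

lemma eq_some_not_iff {o : Option Bool} (ho : o ≠ none) (b : Bool) :
    o = some (!b) ↔ o ≠ some b := by
  rcases o with _ | _ | _ <;> cases b <;> simp_all

def faceSign (o : Option Bool) : ℤ := o.elim 0 sgn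

namespace Cell

lemma below_update_of_le (σ : Cell n) {i j : Fin n} (v : Option Bool) (h : j ≤ i) :
    below (Function.update σ i v) j = σ.below j := by
  unfold below
  congr 1
  refine Finset.filter_congr fun j' _ => and_congr_right fun hj' => ?_
  rw [Function.update_of_ne (hj'.trans_le h).ne]

lemma below_update_of_eq_none_iff (σ : Cell n) {i : Fin n} {v : Option Bool}
    (hv : v = none ↔ σ i = none) : below (Function.update σ i v) = σ.below := by
  funext j
  unfold below
  congr 1
  refine Finset.filter_congr fun j' _ => and_congr_right fun _ => ?_
  rcases eq_or_ne j' i with rfl | hj'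
  · simpa using hv
  · rw [Function.update_of_ne hj']

lemma dim_update_of_eq_none_iff (σ : Cell n) {i : Fin n} {v : Option Bool}
    (hv : v = none ↔ σ i = none) : dim (Function.update σ i v) = σ.dim := by
  unfold dim
  congr 1
  refine Finset.filter_congr fun j _ => ?_
  rcases eq_or_ne j i with rfl | hj
  · simpa using hv
  · rw [Function.update_of_ne hj]

lemma below_update_none_of_lt {σ : Cell n} {i j : Fin n} (hσ : σ i ≠ none) (hij : i < j) :
    below (Function.update σ i none) j = σ.below j + 1 := by
  unfold below
  have : (Finset.univ.filter fun j' => j' < j ∧ Function.update σ i none j' = none)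
      = insert i (Finset.univ.filter fun j' => j' < j ∧ σ j' = none) := by
    ext j'
    rcases eq_or_ne j' i with rfl | hj'
    · simp [hij]
    · simp [hj']
  rw [this, Finset.card_insert_of_notMem (by simp [hσ])]

lemma dim_update_none {σ : Cell n} {i : Fin n} (hσ : σ i ≠ none) :
    dim (Function.update σ i none) = σ.dim + 1 := by
  unfold dim
  have : (Finset.univ.filter fun j => Function.update σ i none j = none)
      = insert i (Finset.univ.filter fun j => σ j = none) := by
    ext j
    rcases eq_or_ne j i with rfl | hj
    · simp
    · simp [hj]
  rw [this, Finset.card_insert_of_notMem (by simp [hσ])]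

end Cell

lemma bd_eq_linearCombination (c : Chain n) : bd c = Finsupp.linearCombination ℤ bdCell c :=
  (Finsupp.linearCombination_apply ℤ c).symm

lemma bdCell_apply_summand (σ τ : Cell n) (i : Fin n) :
    (if σ i = none then (-1 : ℤ) ^ σ.below i *
        (Finsupp.single (Function.update σ i (some true)) 1 τ -
          Finsupp.single (Function.update σ i (some false)) 1 τ) else 0) =
      (-1) ^ τ.below i * faceSign (τ i) * Finsupp.single σ 1 (Function.update τ i none) := by
  by_cases hτσ : Function.update τ i none = σ
  · subst hτσ
    simp only [Function.update_self, if_true, Function.update_idem,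
      Cell.below_update_of_le _ _ le_rfl, Finsupp.single_eq_same, mul_one,
      Finsupp.single_apply, Function.update_eq_self_iff]
    rcases τ i with _ | _ | _ <;> simp [faceSign, sgn]
  · rw [Finsupp.single_eq_of_ne hτσ, mul_zero, ite_eq_right_iff]
    intro hσ
    have hupd : ∀ β : Bool, Function.update σ i (some β) ≠ τ := by
      rintro β rfl
      exact hτσ (by rw [Function.update_idem, ← hσ, Function.update_eq_self])
    simp [hupd]

lemma bd_apply (c : Chain n) (τ : Cell n) :
    bd c τ = ∑ i, (-1) ^ τ.below i * faceSign (τ i) * c (Function.update τ i none) := by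
  rw [bd_eq_linearCombination]
  induction c using Finsupp.induction_linear with
  | zero => simp
  | add c c' hc hc' =>
    simp only [map_add, Finsupp.add_apply, hc, hc', mul_add, Finset.sum_add_distrib]
  | single σ z =>
    rw [Finsupp.linearCombination_single, Finsupp.smul_apply, smul_eq_mul, bdCell,
      Finset.sum_apply', Finset.sum_filter, Finset.mul_sum]
    refine Finset.sum_congr rfl fun i _ => ?_
    have hz : Finsupp.single σ z (Function.update τ i none) =
        z * Finsupp.single σ 1 (Function.update τ i none) := by
      simp [Finsupp.single_apply]
    rw [hz, mul_left_comm, ← bdCell_apply_summand]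
    split_ifs <;> simp

/-- The cells of the atom `⟨ρ⟩^α` (see `atom_eq_extremeSum`). -/
def IsExtremeFace (ρ : Cell n) (α : Bool) (σ : Cell n) : Prop :=
  (∀ j, ρ j ≠ none → σ j = ρ j) ∧
    ∀ j, ρ j = none → σ j ≠ none → σ j = some (twist α (σ.below j))

instance (ρ : Cell n) (α : Bool) : DecidablePred (IsExtremeFace ρ α) := fun _ => by
  unfold IsExtremeFace; infer_instance

def extremeFaces (ρ : Cell n) (α : Bool) (q : ℕ) : Finset (Cell n) :=
  {σ | IsExtremeFace ρ α σ ∧ σ.dim = q}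

noncomputable def extremeSum (ρ : Cell n) (α : Bool) (q : ℕ) : Chain n :=
  ∑ σ ∈ extremeFaces ρ α q, Finsupp.single σ 1

@[simp]
lemma mem_extremeFaces {ρ σ : Cell n} {α : Bool} {q : ℕ} :
    σ ∈ extremeFaces ρ α q ↔ IsExtremeFace ρ α σ ∧ σ.dim = q := by
  simp [extremeFaces]

lemma extremeSum_apply (ρ : Cell n) (α : Bool) (q : ℕ) (τ : Cell n) :
    extremeSum ρ α q τ = if τ ∈ extremeFaces ρ α q then 1 else 0 := by
  simp only [extremeSum, Finset.sum_apply', Finsupp.single_apply, Finset.sum_ite_eq']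

lemma IsExtremeFace.nones_subset {ρ σ : Cell n} {α : Bool} (h : IsExtremeFace ρ α σ) :
    Finset.univ.filter (fun j => σ j = none) ⊆ Finset.univ.filter (fun j => ρ j = none) := by
  intro j hj
  simp only [Finset.mem_filter, Finset.mem_univ, true_and] at hj ⊢
  by_contra hρj
  exact hρj (hj ▸ h.1 j hρj).symm

lemma IsExtremeFace.dim_le {ρ σ : Cell n} {α : Bool} (h : IsExtremeFace ρ α σ) :
    σ.dim ≤ ρ.dim :=
  Finset.card_le_card h.nones_subset

lemma extremeFaces_eq_empty {ρ : Cell n} {α : Bool} {q : ℕ} (hq : ρ.dim < q) :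
    extremeFaces ρ α q = ∅ :=
  Finset.eq_empty_of_forall_notMem fun _ hσ =>
    (mem_extremeFaces.mp hσ).2 ▸ hq |>.not_ge (mem_extremeFaces.mp hσ).1.dim_le

lemma extremeFaces_dim (ρ : Cell n) (α : Bool) : extremeFaces ρ α ρ.dim = {ρ} := by
  ext σ
  simp only [mem_extremeFaces, Finset.mem_singleton]
  constructor
  · rintro ⟨h, hdim⟩
    have hnone : Finset.univ.filter (fun j => σ j = none) = Finset.univ.filter (ρ · = none) :=
      Finset.eq_of_subset_of_card_le h.nones_subset hdim.ge
    funext j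
    by_cases hρj : ρ j = none
    · rw [hρj]
      simpa [hρj] using Finset.ext_iff.mp hnone j
    · exact h.1 j hρj
  · rintro rfl
    exact ⟨⟨fun _ _ => rfl, fun _ h h' => absurd h h'⟩, rfl⟩

/-- Such a cell has a factor `∂^β u₁` where `ρ` has `u₁`, and there the two sign rules
disagree. -/
lemma disjoint_extremeFaces {ρ : Cell n} {α : Bool} {q : ℕ} (hq : q < ρ.dim) :
    Disjoint (extremeFaces ρ α q) (extremeFaces ρ (!α) q) := by
  rw [Finset.disjoint_left]
  rintro τ h₁ h₂
  obtain ⟨⟨hagree, hτα⟩, hdim⟩ := mem_extremeFaces.mp h₁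
  obtain ⟨j, hρj, hτj⟩ : ∃ j, ρ j = none ∧ τ j ≠ none := by
    by_contra! hno
    refine (hdim ▸ hq).not_ge (Finset.card_le_card fun j hj => ?_)
    simp only [Finset.mem_filter, Finset.mem_univ, true_and] at hj ⊢
    exact hno j hj
  have := (mem_extremeFaces.mp h₂).1.2 j hρj hτj
  rw [twist_not, hτα j hρj hτj] at this
  simp at this

def newFaces (ρ τ : Cell n) : Finset (Fin n) := {j | ρ j = none ∧ τ j ≠ none}

lemma isExtremeFace_iff_of_agree {ρ τ : Cell n} (hτ : ∀ j, ρ j ≠ none → τ j = ρ j) (α : Bool) :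
    IsExtremeFace ρ α τ ↔ ∀ j ∈ newFaces ρ τ, τ j = some (twist α (τ.below j)) := by
  simp only [IsExtremeFace, newFaces, Finset.mem_filter, Finset.mem_univ, true_and, and_imp]
  exact and_iff_right hτ

lemma isExtremeFace_not_iff_of_agree {ρ τ : Cell n} (hτ : ∀ j, ρ j ≠ none → τ j = ρ j)
    (α : Bool) :
    IsExtremeFace ρ (!α) τ ↔ ∀ j ∈ newFaces ρ τ, τ j ≠ some (twist α (τ.below j)) := by
  rw [isExtremeFace_iff_of_agree hτ]
  refine forall₂_congr fun j hj => ?_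
  rw [twist_not, eq_some_not_iff (Finset.mem_filter.mp hj).2.2]

/-- Restoring `u₁` at `i` adds one to the count of `u₁` factors before every later position,
which flips the sign rule there. -/
lemma isExtremeFace_update_none_iff {ρ τ : Cell n} {α : Bool} (hτ : ∀ j, ρ j ≠ none → τ j = ρ j)
    {i : Fin n} (hi : τ i ≠ none) :
    IsExtremeFace ρ α (Function.update τ i none) ↔ i ∈ newFaces ρ τ ∧
      (∀ j ∈ newFaces ρ τ, j < i → τ j = some (twist α (τ.below j))) ∧
      (∀ j ∈ newFaces ρ τ, i < j → τ j ≠ some (twist α (τ.below j))) := by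
  simp only [newFaces, Finset.mem_filter, Finset.mem_univ, true_and, and_imp]
  constructor
  · rintro ⟨hagree, hsign⟩
    have hρi : ρ i = none := by
      by_contra hρi
      exact hi (by simpa using ((hagree i hρi).trans (hτ i hρi).symm).symm)
    refine ⟨⟨hρi, hi⟩, fun j hρj hτj hji => ?_, fun j hρj hτj hij => ?_⟩
    · have := hsign j hρj (by rwa [Function.update_of_ne hji.ne])
      rwa [Function.update_of_ne hji.ne, Cell.below_update_of_le _ _ hji.le] at this
    · have := hsign j hρj (by rwa [Function.update_of_ne hij.ne'])
      rwa [Function.update_of_ne hij.ne', Cell.below_update_none_of_lt hi hij, twist_succ,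
        eq_some_not_iff hτj] at this
  · rintro ⟨⟨hρi, -⟩, hbefore, hafter⟩
    refine ⟨fun j hρj => ?_, fun j hρj hτj => ?_⟩
    · rw [Function.update_of_ne (ne_of_apply_ne ρ (hρi ▸ hρj)), hτ j hρj]
    · have hji : j ≠ i := by rintro rfl; simp at hτj
      rw [Function.update_of_ne hji] at hτj ⊢
      rcases hji.lt_or_gt with hji | hij
      · rw [Cell.below_update_of_le _ _ hji.le]
        exact hbefore j hρj hτj hji
      · rw [Cell.below_update_none_of_lt hi hij, twist_succ, eq_some_not_iff hτj]
        exact hafter j hρj hτj hij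

lemma agree_of_isExtremeFace_update_none {ρ τ : Cell n} {α : Bool} {i : Fin n}
    (h : IsExtremeFace ρ α (Function.update τ i none)) : ∀ j, ρ j ≠ none → τ j = ρ j := by
  intro j hρj
  have hji : j ≠ i := by
    rintro rfl
    exact hρj (by simpa using (h.1 j hρj).symm)
  simpa [Function.update_of_ne hji] using h.1 j hρj

lemma bd_extremeSum_apply_of_agree {ρ τ : Cell n} (hagree : ∀ j, ρ j ≠ none → τ j = ρ j)
    {q : ℕ} (hdim : τ.dim = q) (α : Bool) :
    bd (extremeSum ρ α (q + 1)) τ = sgn α * (extremeSum ρ α q τ - extremeSum ρ (!α) q τ) := by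
  simp only [bd_apply, extremeSum_apply, mem_extremeFaces, mul_ite, mul_one, mul_zero]
  set p : Fin n → Prop := fun j => τ j = some (twist α (τ.below j))
  have hterm : ∀ i, (if IsExtremeFace ρ α (Function.update τ i none) ∧
        Cell.dim (Function.update τ i none) = q + 1 then
        (-1) ^ τ.below i * faceSign (τ i) else 0) =
      if i ∈ newFaces ρ τ ∧ (∀ j ∈ newFaces ρ τ, j < i → p j) ∧
        ∀ j ∈ newFaces ρ τ, i < j → ¬ p j then sgn α * if p i then 1 else -1 else 0 := by
    intro i
    by_cases hi : τ i = none
    · have : i ∉ newFaces ρ τ := by simp [newFaces, hi]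
      simp [this, hi, faceSign]
    · obtain ⟨δ, hδ⟩ := Option.ne_none_iff_exists'.mp hi
      simp only [Cell.dim_update_none hi, hdim, and_true, isExtremeFace_update_none_iff hagree hi]
      simp only [p, hδ, Option.some_inj, faceSign, Option.elim, neg_one_pow_mul_sgn α δ]
  have hfilter : ({i | i ∈ newFaces ρ τ ∧ (∀ j ∈ newFaces ρ τ, j < i → p j) ∧
      ∀ j ∈ newFaces ρ τ, i < j → ¬ p j} : Finset (Fin n)) =
      {i ∈ newFaces ρ τ | (∀ j ∈ newFaces ρ τ, j < i → p j) ∧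
        ∀ j ∈ newFaces ρ τ, i < j → ¬ p j} := by
    ext; simp
  rw [Finset.sum_congr rfl fun i _ => hterm i, ← Finset.sum_filter, hfilter, ← Finset.mul_sum]
  simp only [isExtremeFace_not_iff_of_agree hagree, hdim, and_true]
  simp only [isExtremeFace_iff_of_agree hagree]
  convert congrArg (sgn α * ·) (sum_sign_switchPoints (newFaces ρ τ) p)

lemma bd_extremeSum_apply_of_not_agree {ρ τ : Cell n} {q : ℕ}
    (hτ : ¬ ((∀ j, ρ j ≠ none → τ j = ρ j) ∧ τ.dim = q)) (α : Bool) :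
    bd (extremeSum ρ α (q + 1)) τ = 0 := by
  refine (bd_apply _ τ).trans (Finset.sum_eq_zero fun i _ => ?_)
  by_cases hi : τ i = none
  · simp [hi, faceSign]
  · rw [extremeSum_apply, if_neg, mul_zero]
    rw [mem_extremeFaces, Cell.dim_update_none hi, Nat.add_right_cancel_iff]
    exact fun h => hτ ⟨agree_of_isExtremeFace_update_none h.1, h.2⟩

lemma bd_extremeSum (ρ : Cell n) (α : Bool) (q : ℕ) :
    bd (extremeSum ρ α (q + 1)) = sgn α • (extremeSum ρ α q - extremeSum ρ (!α) q) := by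
  ext τ
  rw [Finsupp.smul_apply, Finsupp.sub_apply, smul_eq_mul]
  by_cases hτ : (∀ j, ρ j ≠ none → τ j = ρ j) ∧ τ.dim = q
  · exact bd_extremeSum_apply_of_agree hτ.1 hτ.2 α
  · have hnot : ∀ β, τ ∉ extremeFaces ρ β q := fun β h =>
      hτ ⟨(mem_extremeFaces.mp h).1.1, (mem_extremeFaces.mp h).2⟩
    rw [bd_extremeSum_apply_of_not_agree hτ, extremeSum_apply, extremeSum_apply, if_neg (hnot _),
      if_neg (hnot _), sub_zero, mul_zero]

lemma posPart_extremeSum_sub {ρ : Cell n} {q : ℕ} (hq : q < ρ.dim) :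
    posPart (extremeSum ρ true q - extremeSum ρ false q) = extremeSum ρ true q := by
  ext τ
  have := @Finset.disjoint_left.mp (disjoint_extremeFaces (α := true) hq) τ
  simp only [posPart, Finsupp.mapRange_apply, Finsupp.sub_apply, extremeSum_apply]
  split_ifs <;> simp_all

lemma negPart_extremeSum_sub {ρ : Cell n} {q : ℕ} (hq : q < ρ.dim) :
    negPart (extremeSum ρ true q - extremeSum ρ false q) = extremeSum ρ false q := by
  ext τ
  have := @Finset.disjoint_left.mp (disjoint_extremeFaces (α := true) hq) τ
  simp only [negPart, Finsupp.mapRange_apply, Finsupp.sub_apply, extremeSum_apply]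
  split_ifs <;> simp_all

lemma bdp_extremeSum {ρ : Cell n} (α : Bool) {q : ℕ} (hq : q < ρ.dim) :
    bdp α (extremeSum ρ α (q + 1)) = extremeSum ρ α q := by
  cases α
  · rw [bdp, if_neg Bool.false_ne_true, bd_extremeSum, sgn, if_neg Bool.false_ne_true,
      neg_smul, one_smul, neg_sub, Bool.not_false, negPart_extremeSum_sub hq]
  · rw [bdp, if_pos rfl, bd_extremeSum, sgn, if_pos rfl, one_smul, Bool.not_true,
      posPart_extremeSum_sub hq]

lemma extremeSum_dim (ρ : Cell n) (α : Bool) :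
    extremeSum ρ α ρ.dim = Finsupp.single ρ 1 := by
  rw [extremeSum, extremeFaces_dim, Finset.sum_singleton]

lemma iterate_bdp_single (ρ : Cell n) (α : Bool) {d : ℕ} (hd : d ≤ ρ.dim) :
    (bdp α)^[d] (Finsupp.single ρ 1) = extremeSum ρ α (ρ.dim - d) := by
  induction d with
  | zero => rw [Function.iterate_zero_apply, Nat.sub_zero, extremeSum_dim]
  | succ d ih =>
    rw [Function.iterate_succ_apply', ih (by omega),
      ← bdp_extremeSum α (by omega : ρ.dim - (d + 1) < ρ.dim)]
    congr 2
    omega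

lemma atom_eq_extremeSum (ρ : Cell n) (α : Bool) (q : ℕ) : atom ρ α q = extremeSum ρ α q := by
  rw [atom]
  split_ifs with hq
  · rw [iterate_bdp_single ρ α (Nat.sub_le _ _), Nat.sub_sub_self hq]
  · rw [extremeSum, extremeFaces_eq_empty (not_le.mp hq), Finset.sum_empty]

noncomputable def faceProj (k : Fin n) (γ : Bool) : Chain n →ₗ[ℤ] Chain n :=
  Finsupp.linearCombination ℤ fun τ =>
    if τ k = none then 0 else Finsupp.single (Function.update τ k (some γ)) 1

lemma faceProj_single (k : Fin n) (γ : Bool) (τ : Cell n) :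
    faceProj k γ (Finsupp.single τ 1) =
      if τ k = none then 0 else Finsupp.single (Function.update τ k (some γ)) 1 := by
  rw [faceProj, Finsupp.linearCombination_single, one_smul]

lemma faceProj_apply (k : Fin n) (γ : Bool) (c : Chain n) (τ : Cell n) :
    faceProj k γ c τ =
      if τ k = some γ then ∑ β : Bool, c (Function.update τ k (some β)) else 0 := by
  induction c using Finsupp.induction_linear with
  | zero => simp
  | add c c' hc hc' =>
    simp only [map_add, Finsupp.add_apply, hc, hc', Finset.sum_add_distrib]
    split_ifs <;> simp
  | single σ z =>
    rw [← Finsupp.smul_single_one, map_smul, faceProj_single]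
    simp only [Finsupp.smul_apply, smul_eq_mul, Finsupp.single_apply, mul_ite, mul_one, mul_zero]
    by_cases hσ : σ k = none
    · have hne : ∀ β, σ ≠ Function.update τ k (some β) := fun β h => by simp [h] at hσ
      simp [hσ, hne]
    obtain ⟨δ, hδ⟩ := Option.ne_none_iff_exists'.mp hσ
    by_cases hτσ : Function.update σ k (some γ) = τ
    · subst hτσ
      have hβ : ∀ β, σ = Function.update σ k (some β) ↔ β = δ := fun β => by
        rw [eq_comm, Function.update_eq_self_iff, hδ, Option.some_inj]
      simp [hσ, Function.update_idem, hβ]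
    · have hne : τ k = some γ → ∀ β, σ ≠ Function.update τ k (some β) := by
        rintro hτ β rfl
        exact hτσ (by rw [Function.update_idem, ← hτ, Function.update_eq_self])
      rw [if_neg hσ, Finsupp.single_eq_of_ne (Ne.symm hτσ), mul_zero]
      split_ifs with hτ
      · simp [hne hτ]
      · rfl

lemma faceProj_bd (k : Fin n) (γ : Bool) (c : Chain n) :
    faceProj k γ (bd c) = bd (faceProj k γ c) := by
  ext τ
  simp only [faceProj_apply, bd_apply]
  split_ifs with hτ
  · rw [Finset.sum_comm]
    refine Finset.sum_congr rfl fun i _ => ?_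
    by_cases hik : i = k
    · subst hik
      -- the two faces `∂^± u₁` at position `k` cancel
      simp only [Function.update_self, Cell.below_update_of_le _ _ le_rfl, Function.update_idem,
        reduceCtorEq, if_false, if_true, mul_zero, Fintype.sum_bool, faceSign, Option.elim, sgn]
      ring
    · have hbelow : ∀ β : Bool, Cell.below (Function.update τ k (some β)) = τ.below :=
        fun β => Cell.below_update_of_eq_none_iff τ (by simp [hτ])
      simp only [Function.update_of_ne hik, Function.update_of_ne (Ne.symm hik), hτ, if_true,
        hbelow, Finset.mul_sum, Function.update_comm (Ne.symm hik)]
  · refine (Finset.sum_eq_zero fun i _ => ?_).symm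
    rw [if_neg, mul_zero]
    by_cases hik : i = k
    · simp [hik]
    · rwa [Function.update_of_ne (Ne.symm hik)]

lemma isExtremeFace_update_some_iff {ρ τ : Cell n} {k : Fin n} (hρ : ρ k = none) {γ : Bool}
    (hτ : τ k = some γ) (α β : Bool) :
    IsExtremeFace ρ α (Function.update τ k (some β)) ↔
      IsExtremeFace (Function.update ρ k (some γ)) α τ ∧ β = twist α (τ.below k) := by
  have hbelow : Cell.below (Function.update τ k (some β)) = τ.below :=
    Cell.below_update_of_eq_none_iff τ (by simp [hτ])
  simp only [IsExtremeFace, hbelow]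
  rw [Function.forall_update_iff _ fun j v => ρ j ≠ none → v = ρ j,
    Function.forall_update_iff _ fun j v => ρ j = none → v ≠ none → v = some (twist α (τ.below j)),
    Function.forall_update_iff _ fun j v => v ≠ none → τ j = v,
    Function.forall_update_iff _ fun j v => v = none → τ j ≠ none →
      τ j = some (twist α (τ.below j))]
  simp [hρ, hτ]
  tauto

lemma faceProj_extremeSum {ρ : Cell n} {k : Fin n} (hρ : ρ k = none) (γ α : Bool) (q : ℕ) :
    faceProj k γ (extremeSum ρ α q) = extremeSum (Function.update ρ k (some γ)) α q := by
  ext τ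
  simp only [faceProj_apply, extremeSum_apply, mem_extremeFaces]
  by_cases hτ : τ k = some γ
  · have hdim : ∀ β : Bool, Cell.dim (Function.update τ k (some β)) = τ.dim :=
      fun β => Cell.dim_update_of_eq_none_iff τ (by simp [hτ])
    simp only [if_pos hτ, isExtremeFace_update_some_iff hρ hτ, hdim, Fintype.sum_bool]
    generalize twist α (τ.below k) = b
    cases b <;> simp
  · rw [if_neg hτ, if_neg]
    rintro ⟨h, -⟩
    exact hτ (by simpa using h.1 k (by simp))

/-- for `1 ≤ k ≤ n` (here `k : Fin n` is the 0-indexed position) and a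
sign `γ`, with `σ = u_{k−1} ⊗ ∂^γ u₁ ⊗ u_{n−k}`, there is a chain map `f : Iⁿ → Iⁿ`
with `f(x ⊗ u₁ ⊗ y) = 0` and `f(x ⊗ ∂^γ u₁ ⊗ y) = f(x ⊗ ∂^{−γ} u₁ ⊗ y)
= x ⊗ ∂^γ u₁ ⊗ y`, and this chain map satisfies `f ⟨u_n⟩_i^α = ⟨σ⟩_i^α` for all `i`
and `α`. -/
theorem projection_chain_map_sends_top_atom_to_face_atom (n : ℕ) (k : Fin n) (γ : Bool) :
    ∃ f : Chain n →ₗ[ℤ] Chain n,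
      (∀ c : Chain n, f (bd c) = bd (f c)) ∧
      (∀ τ : Cell n, τ k = none → f (Finsupp.single τ 1) = 0) ∧
      (∀ τ : Cell n, τ k ≠ none →
        f (Finsupp.single τ 1) = Finsupp.single (Function.update τ k (some γ)) 1) ∧
      (∀ (i : ℕ) (α : Bool), f (atom (un n) α i) = atom (kcell k γ) α i) := by
  refine ⟨faceProj k γ, faceProj_bd k γ, fun τ hτ => ?_, fun τ hτ => ?_, fun i α => ?_⟩
  · rw [faceProj_single, if_pos hτ]
  · rw [faceProj_single, if_neg hτ]
  · rw [atom_eq_extremeSum, atom_eq_extremeSum, faceProj_extremeSum rfl]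
    rfl

end CubicalNerve
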